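/- Convergence of the naive version-vector counter: in any configuration reached at time t by a finite execution of the naive G-Counter, if node i's replica dominates every node's replica pointwise (s j ≤ s i for all nodes j), then the fetch at node i equals the total number of increment steps performed before time t, i.e., all increments are accounted. -/
import Mathlib


/-- Labels for the steps of the naive version-vector (G-Counter) model:
a local increment at node `i`, or a merge into node `i`'s replica. -/
inductive GLab (ι : Type) where
  | inc (i : ι)
  | merge (i : ι)
deriving DecidableEq

/-- `(GLab.isInc l) = true` iff `l` labels a local increment step. -/
def GLab.isInc {ι : Type} : GLab ι → Bool
  | .inc _ => true
  | .merge _ => false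

/-- An execution of the naive G-Counter: `st t i : ι →₀ ℕ` is the replica of
node `i` in the configuration at time `t`, starting from the all-zero
configuration.  Each step changes only one node `i`'s replica: a local
increment (`inc i`) adds `Finsupp.single i 1` to `s i`, and a merge replaces
`s i` by `s i ⊔ v` (pointwise maximum), where `v` is the replica of some node
`j` in some earlier configuration of the execution. -/
def GExec {ι : Type} [DecidableEq ι]
    (st : ℕ → ι → (ι →₀ ℕ)) (lab : ℕ → GLab ι) : Prop :=
  (∀ i, st 0 i = 0) ∧
  ∀ n, match lab n with
    | .inc i =>
        st (n + 1) i = st n i + Finsupp.single i 1 ∧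
        ∀ j, j ≠ i → st (n + 1) j = st n j
    | .merge i =>
        (∃ m ≤ n, ∃ j, st (n + 1) i = st n i ⊔ st m j) ∧
        ∀ j, j ≠ i → st (n + 1) j = st n j

/-- `incCount lab j t`: the number of `inc j` steps performed before time `t`. -/
def incCount {ι : Type} [DecidableEq ι] (lab : ℕ → GLab ι) (j : ι) (t : ℕ) : ℕ :=
  ((Finset.range t).filter (fun n => lab n = GLab.inc j)).card

/-- `totalIncCount lab t`: the total number of increment steps (over all
nodes) performed before time `t`. -/
def totalIncCount {ι : Type} (lab : ℕ → GLab ι) (t : ℕ) : ℕ :=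
  ((Finset.range t).filter (fun n => (lab n).isInc)).card

/-- The fetch at node `i`: the sum of all entries of its replica. -/
def gfetch {ι : Type} (st : ℕ → ι → (ι →₀ ℕ)) (t : ℕ) (i : ι) : ℕ :=
  (st t i).sum fun _ v => v

lemma incCount_succ {ι : Type} [DecidableEq ι] (lab : ℕ → GLab ι) (j : ι) (t : ℕ) :
    incCount lab j (t+1) = incCount lab j t + if lab t = GLab.inc j then 1 else 0 := by
  unfold incCount
  rw [Finset.range_add_one, Finset.filter_insert]
  split
  · rw [Finset.card_insert_of_notMem (by simp)]
  · simp

lemma incCount_mono {ι : Type} [DecidableEq ι] (lab : ℕ → GLab ι) (j : ι) {m n : ℕ}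
    (h : m ≤ n) : incCount lab j m ≤ incCount lab j n :=
  Finset.card_le_card (Finset.filter_subset_filter _ (Finset.range_subset_range.2 h))

lemma entry_le {ι : Type} [DecidableEq ι] {st : ℕ → ι → (ι →₀ ℕ)} {lab : ℕ → GLab ι}
    (hexec : GExec st lab) : ∀ t j k, (st t j) k ≤ incCount lab k t := by
  intro t
  induction t using Nat.strong_induction_on with
  | _ t ih =>
    match t with
    | 0 => intro j k; simp [hexec.1, incCount]
    | n+1 =>
      intro j k
      have h := hexec.2 n
      rw [incCount_succ]
      cases hl : lab n with
      | inc i' =>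
        rw [hl] at h
        by_cases hj : j = i'
        · subst hj
          rw [h.1]
          rw [Finsupp.add_apply, Finsupp.single_apply]
          have := ih n (by omega) j k
          by_cases hk : j = k
          · subst hk; simp; omega
          · have : ¬ (GLab.inc j = GLab.inc k) := by simpa using hk
            simp [hk, this]; omega
        · rw [h.2 j hj]
          have := ih n (by omega) j k
          omega
      | merge i' =>
        rw [hl] at h
        by_cases hj : j = i'
        · subst hj
          obtain ⟨m, hm, j', hst⟩ := h.1
          rw [hst, Finsupp.sup_apply]
          have h1 := ih n (by omega) j k
          have h2 := ih m (by omega) j' k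
          have h3 := incCount_mono lab k hm
          simp only [sup_le_iff]
          omega
        · rw [h.2 j hj]
          have := ih n (by omega) j k
          omega

lemma own_entry {ι : Type} [DecidableEq ι] {st : ℕ → ι → (ι →₀ ℕ)} {lab : ℕ → GLab ι}
    (hexec : GExec st lab) : ∀ t j, (st t j) j = incCount lab j t := by
  intro t
  induction t with
  | zero => intro j; simp [hexec.1, incCount]
  | succ n ih =>
    intro j
    have h := hexec.2 n
    rw [incCount_succ]
    cases hl : lab n with
    | inc i' =>
      rw [hl] at h
      by_cases hj : j = i'
      · subst hj
        rw [h.1, Finsupp.add_apply, Finsupp.single_apply, ih]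
        simp
      · rw [h.2 j hj, ih]
        have : ¬ (GLab.inc i' = GLab.inc j) := by simpa using Ne.symm hj
        simp [this]
    | merge i' =>
      rw [hl] at h
      simp only [reduceCtorEq, if_false, add_zero]
      by_cases hj : j = i'
      · subst hj
        obtain ⟨m, hm, j', hst⟩ := h.1
        rw [hst, Finsupp.sup_apply, ih]
        have h2 := entry_le hexec m j' j
        have h3 := incCount_mono lab j hm
        exact sup_eq_left.2 (le_trans h2 h3)
      · rw [h.2 j hj, ih]

/-- Convergence of the naive version-vector counter: in any configuration
reached at time `t` by a finite execution of the naive G-Counter, if node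
`i`'s replica dominates every node's replica pointwise, then the fetch at node
`i` equals the total number of increment steps performed before time `t`:
all increments are accounted. -/
theorem gcounter_convergence {ι : Type} [DecidableEq ι]
    (st : ℕ → ι → (ι →₀ ℕ)) (lab : ℕ → GLab ι) (hexec : GExec st lab)
    (t : ℕ) (i : ι) (hdom : ∀ j, st t j ≤ st t i) :
    gfetch st t i = totalIncCount lab t := by
  have key : ∀ j, (st t i) j = incCount lab j t := by
    intro j
    have h1 := entry_le hexec t i j
    have h2 := own_entry hexec t j
    have h3 : (st t j) j ≤ (st t i) j := Finsupp.le_def.mp (hdom j) j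
    omega
  have hset : ((Finset.range t).filter fun n => (lab n).isInc) =
      (st t i).support.biUnion
        (fun j => (Finset.range t).filter fun n => lab n = GLab.inc j) := by
    ext n
    simp only [Finset.mem_biUnion, Finset.mem_filter, Finset.mem_range]
    constructor
    · rintro ⟨hn, hinc⟩
      cases hl : lab n with
      | inc j =>
        refine ⟨j, ?_, hn, rfl⟩
        rw [Finsupp.mem_support_iff, key j]
        have hpos : 0 < incCount lab j t := by
          refine Finset.card_pos.2 ⟨n, Finset.mem_filter.2 ⟨Finset.mem_range.2 hn, ?_⟩⟩
          exact hl
        omega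
      | merge j => rw [hl] at hinc; simp [GLab.isInc] at hinc
    · rintro ⟨j, _, hn, hl⟩
      exact ⟨hn, by rw [hl]; rfl⟩
  have hdisj : ∀ x ∈ (st t i).support, ∀ y ∈ (st t i).support, x ≠ y →
      Disjoint ((Finset.range t).filter fun n => lab n = GLab.inc x)
        ((Finset.range t).filter fun n => lab n = GLab.inc y) := by
    intro x _ y _ hxy
    refine Finset.disjoint_left.2 ?_
    intro n hnx hny
    have hx := (Finset.mem_filter.1 hnx).2
    have hy := (Finset.mem_filter.1 hny).2
    rw [hx] at hy
    exact hxy (by simpa using hy)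
  rw [gfetch, Finsupp.sum, totalIncCount, hset, Finset.card_biUnion hdisj]
  exact Finset.sum_congr rfl fun j _ => key j
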